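/- For any set S of n ≥ 3 points in general position in the plane, Σ_{k=3}^{n} Σ_{ℓ=0}^{n−3} 2·cos((2k+ℓ)π/3) · X_{k,ℓ}(S) = binom(n,2) + n − 2 + 2·cos(nπ/3). -/

import Mathlib

open Finset
open scoped Classical

def GenPos (S : Finset (ℝ × ℝ)) : Prop :=
  ∀ T ⊆ S, T.card = 3 → ¬ Collinear ℝ (T : Set (ℝ × ℝ))

def ConvexPos (T : Finset (ℝ × ℝ)) : Prop :=
  ∀ p ∈ T, p ∉ convexHull ℝ ((T : Set (ℝ × ℝ)) \ {p})

/-- number of convex k-gons with vertices in S and exactly l points of S inside -/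
noncomputable def X (S : Finset (ℝ × ℝ)) (k l : ℕ) : ℕ :=
  ((Finset.powersetCard k S).filter (fun T => ConvexPos T ∧
    (S.filter (fun p => p ∈ interior (convexHull ℝ (T : Set (ℝ × ℝ))))).card = l)).card

/-- number of extreme points (convex hull vertices) of S -/
noncomputable def hullVerts (S : Finset (ℝ × ℝ)) : ℕ :=
  (S.filter (fun p => p ∉ convexHull ℝ ((S : Set (ℝ × ℝ)) \ {p}))).card

/-!
A subset `A ⊆ S` with `|A| ≥ 3` is determined by the vertex set `T` of its convex hull and by
`B = A \ T`. By general position `T` has at least three points and the points of `B` lie in the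
interior of `conv T`; conversely every convex polygon `T ⊆ S` and every set `B` of points of `S`
interior to it arise in this way. Weighting each subset by `y ^ |A|` therefore gives
`∑_{k,ℓ} X_{k,ℓ} y^k (1 + y)^ℓ = ∑_{|A| ≥ 3} y^|A| = (1 + y)^n - 1 - n y - C(n,2) y²`.
For `y = ω²` with `ω = exp (iπ/3)` we have `1 + y = ω`, and twice the real part is the claim.
-/

section ExtremePoints

variable {𝕜 E : Type*} [Field 𝕜] [LinearOrder 𝕜] [IsStrictOrderedRing 𝕜] [AddCommGroup E]
  [Module 𝕜 E]

theorem mem_extremePoints_convexHull_insert {s : Set E} {x : E} (hx : x ∉ convexHull 𝕜 s) :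
    x ∈ (convexHull 𝕜 (insert x s)).extremePoints 𝕜 := by
  rcases s.eq_empty_or_nonempty with rfl | hs
  · simp
  refine mem_extremePoints_iff_left.2 ⟨subset_convexHull 𝕜 _ (Set.mem_insert x s), ?_⟩
  simp only [convexHull_insert hs, mem_convexJoin, Set.mem_singleton_iff, exists_eq_left]
  rintro y ⟨y', hy', c, d, -, hd, hcd, rfl⟩ z ⟨z', hz', e, f, -, hf, hef, rfl⟩
    ⟨a, b, ha, hb, hab, hxyz⟩
  obtain rfl | hd := hd.eq_or_lt
  · simp_all
  refine absurd ?_ hx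
  have hpos : 0 < a * d + b * f := by positivity
  have hcomb : (a * d + b * f) • x = (a * d) • y' + (b * f) • z' := by
    linear_combination (norm := module) -hxyz + hcd • (a • x) + hef • (b • x) + hab • x
  have hx : x = (a * d / (a * d + b * f)) • y' + (b * f / (a * d + b * f)) • z' := by
    rw [← inv_smul_smul₀ hpos.ne' x, hcomb]
    module
  rw [hx]
  exact convex_convexHull 𝕜 s hy' hz' (by positivity) (by positivity) (by field_simp)

end ExtremePoints

section Vertices

variable {E : Type*} [NormedAddCommGroup E] [NormedSpace ℝ E]

noncomputable def convexHullVertices (A : Finset E) : Finset E :=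
  {p ∈ A | p ∈ (convexHull ℝ (A : Set E)).extremePoints ℝ}

theorem coe_convexHullVertices (A : Finset E) :
    (convexHullVertices A : Set E) = (convexHull ℝ (A : Set E)).extremePoints ℝ := by
  ext p
  simpa [convexHullVertices] using fun hp => mem_coe.1 (extremePoints_convexHull_subset hp)

theorem convexHullVertices_subset (A : Finset E) : convexHullVertices A ⊆ A :=
  filter_subset _ _

theorem convexHull_convexHullVertices (A : Finset E) :
    convexHull ℝ (convexHullVertices A : Set E) = convexHull ℝ (A : Set E) := by
  have hK : IsCompact (convexHull ℝ (A : Set E)) := A.finite_toSet.isCompact_convexHull (𝕜 := ℝ)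
  conv_rhs => rw [← closure_convexHull_extremePoints hK (convex_convexHull ℝ _)]
  rw [← coe_convexHullVertices,
    ((convexHullVertices A).finite_toSet.isClosed_convexHull (𝕜 := ℝ)).closure_eq]

end Vertices

theorem convexPos_convexHullVertices (A : Finset (ℝ × ℝ)) : ConvexPos (convexHullVertices A) := by
  have := (convex_convexHull ℝ (A : Set (ℝ × ℝ))).convexIndependent_extremePoints
  rw [← coe_convexHullVertices] at this
  exact convexIndependent_set_iff_notMem_convexHull_sdiff.1 this

namespace ConvexPos

variable {T : Finset (ℝ × ℝ)}

theorem coe_eq_extremePoints (hT : ConvexPos T) :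
    (T : Set (ℝ × ℝ)) = (convexHull ℝ (T : Set (ℝ × ℝ))).extremePoints ℝ := by
  refine Set.Subset.antisymm (fun p hp => ?_) extremePoints_convexHull_subset
  simpa [Set.insert_eq_of_mem hp] using mem_extremePoints_convexHull_insert (hT p hp)

theorem disjoint_interior (hT : ConvexPos T) :
    Disjoint (T : Set (ℝ × ℝ)) (interior (convexHull ℝ (T : Set (ℝ × ℝ)))) := by
  simpa only [← hT.coe_eq_extremePoints] using
    (disjoint_interior_extremePoints (convexHull ℝ (T : Set (ℝ × ℝ)))).symm

theorem convexHullVertices_union (hT : ConvexPos T) {B : Finset (ℝ × ℝ)}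
    (hB : (B : Set (ℝ × ℝ)) ⊆ convexHull ℝ (T : Set (ℝ × ℝ))) :
    convexHullVertices (T ∪ B) = T := by
  have hhull : convexHull ℝ ((T ∪ B : Finset (ℝ × ℝ)) : Set (ℝ × ℝ)) =
      convexHull ℝ (T : Set (ℝ × ℝ)) :=
    (convexHull_min (by simpa using ⟨subset_convexHull ℝ _, hB⟩) (convex_convexHull ℝ _)).antisymm
      (convexHull_mono (by simp))
  ext p
  simp only [convexHullVertices, hhull, ← hT.coe_eq_extremePoints, mem_filter, mem_union,
    mem_coe]
  tauto

end ConvexPos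

section Plane

variable {E : Type*} [AddCommGroup E] [Module ℝ E] [FiniteDimensional ℝ E]

theorem collinear_of_forall_apply_eq (hE : Module.finrank ℝ E = 2) {f : Module.Dual ℝ E}
    (hf : f ≠ 0) {s : Set E} {c : ℝ} (hs : ∀ x ∈ s, f x = c) : Collinear ℝ s := by
  have hspan : vectorSpan ℝ s ≤ LinearMap.ker f := by
    rw [vectorSpan_def, Submodule.span_le]
    rintro _ ⟨x, hx, y, hy, rfl⟩
    simp [hs x hx, hs y hy]
  have hker := f.finrank_ker_add_one_of_ne_zero hf
  have := Submodule.finrank_mono hspan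
  rw [collinear_iff_finrank_le_one]
  omega

theorem affineSpan_eq_top_of_not_collinear (hE : Module.finrank ℝ E = 2) {s : Set E}
    (hs : ¬ Collinear ℝ s) : affineSpan ℝ s = ⊤ := by
  have hne : s.Nonempty := Set.nonempty_iff_ne_empty.2 fun h => hs (h ▸ collinear_empty ℝ E)
  rw [AffineSubspace.affineSpan_eq_top_iff_vectorSpan_eq_top_of_nonempty ℝ E E hne]
  rw [collinear_iff_finrank_le_one, not_le] at hs
  exact Submodule.eq_top_of_finrank_eq (le_antisymm (Submodule.finrank_le _) (by omega))

end Plane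

theorem finrank_real_prod : Module.finrank ℝ (ℝ × ℝ) = 2 := by
  simp

namespace GenPos

variable {S A : Finset (ℝ × ℝ)}

theorem not_collinear (hS : GenPos S) (hA : A ⊆ S) (h3 : 3 ≤ #A) :
    ¬ Collinear ℝ (A : Set (ℝ × ℝ)) := fun hcol => by
  obtain ⟨T, hTA, hT⟩ := exists_subset_card_eq h3
  exact hS T (hTA.trans hA) hT (hcol.subset (coe_subset.2 hTA))

theorem subsingleton_of_collinear (hS : GenPos S) {s : Set (ℝ × ℝ)} {q : ℝ × ℝ} (hqs : q ∉ s)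
    (hsS : insert q s ⊆ S) (hcol : Collinear ℝ (insert q s)) : s.Subsingleton := by
  intro a ha b hb
  by_contra hab
  have hq : ∀ x ∈ s, x ≠ q := fun x hx h => hqs (h ▸ hx)
  refine hS {a, b, q} (fun x hx => ?_) (card_eq_three.2 ⟨a, b, q, hab, hq a ha, hq b hb, rfl⟩)
    (hcol.subset ?_)
  · simp only [mem_insert, mem_singleton] at hx
    rcases hx with rfl | rfl | rfl
    exacts [hsS (Or.inr ha), hsS (Or.inr hb), hsS (Or.inl rfl)]
  · simp [Set.insert_subset_iff, ha, hb]

theorem three_le_card_convexHullVertices (hS : GenPos S) (hA : A ⊆ S) (h3 : 3 ≤ #A) :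
    3 ≤ #(convexHullVertices A) := by
  by_contra! hlt
  obtain ⟨t, hVt, ht⟩ := Infinite.exists_superset_card_eq (convexHullVertices A) 2 (by omega)
  obtain ⟨a, b, -, rfl⟩ := card_eq_two.1 ht
  have hcol : Collinear ℝ (convexHullVertices A : Set (ℝ × ℝ)) :=
    (collinear_pair ℝ a b).subset (by simpa using coe_subset.2 hVt)
  have hspan : vectorSpan ℝ (convexHullVertices A : Set (ℝ × ℝ)) =
      vectorSpan ℝ (A : Set (ℝ × ℝ)) := by
    rw [← direction_affineSpan, ← direction_affineSpan, ← affineSpan_convexHull,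
      convexHull_convexHullVertices, affineSpan_convexHull]
  rw [collinear_iff_rank_le_one, hspan, ← collinear_iff_rank_le_one] at hcol
  exact hS.not_collinear hA h3 hcol

/- If `q` were on the boundary, a supporting line through `q` would cut out a face `F` of the
hull whose extreme points are vertices of the hull on that line, hence different from `q`; by
general position there is at most one of them, so by Krein–Milman `F = {q}`, and `q` would be a
vertex after all. -/
theorem mem_interior_convexHull (hS : GenPos S) (hA : A ⊆ S) (h3 : 3 ≤ #A) {q : ℝ × ℝ}
    (hqA : q ∈ A) (hq : q ∉ convexHullVertices A) :
    q ∈ interior (convexHull ℝ (A : Set (ℝ × ℝ))) := by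
  set C := convexHull ℝ (A : Set (ℝ × ℝ))
  have hqC : q ∈ C := subset_convexHull ℝ _ hqA
  have hqext : q ∉ C.extremePoints ℝ := fun h => hq (mem_filter.2 ⟨hqA, h⟩)
  have hCint : (interior C).Nonempty := interior_convexHull_nonempty_iff_affineSpan_eq_top.2
    (affineSpan_eq_top_of_not_collinear finrank_real_prod (hS.not_collinear hA h3))
  by_contra hqi
  obtain ⟨f, hf⟩ :=
    geometric_hahn_banach_open_point (convex_convexHull ℝ _).interior isOpen_interior hqi
  have hmax : ∀ x ∈ C, f x ≤ f q := by
    have : closure (interior C) ⊆ {x | f x ≤ f q} :=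
      closure_minimal (fun x hx => (hf x hx).le) (isClosed_le f.continuous continuous_const)
    rw [(convex_convexHull ℝ _).closure_interior_eq_closure_of_nonempty_interior hCint] at this
    exact fun x hx => this (subset_closure hx)
  set F := f.toExposed C
  have hFexp : IsExposed ℝ C F := ContinuousLinearMap.toExposed.isExposed
  have hqF : q ∈ F := ⟨hqC, hmax⟩
  have hextF : F.extremePoints ℝ ⊆ C.extremePoints ℝ :=
    hFexp.isExtreme.extremePoints_subset_extremePoints
  have hqextF : q ∉ F.extremePoints ℝ := fun h => hqext (hextF h)
  have hsub : (F.extremePoints ℝ).Subsingleton := by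
    refine hS.subsingleton_of_collinear hqextF (Set.insert_subset (hA hqA)
      ((hextF.trans extremePoints_convexHull_subset).trans (coe_subset.2 hA))) ?_
    obtain ⟨w, hw⟩ := hCint
    have hf0 : f.toLinearMap ≠ 0 := fun h => (hf w hw).ne
      (by simpa using (LinearMap.congr_fun h w).trans (LinearMap.congr_fun h q).symm)
    refine collinear_of_forall_apply_eq finrank_real_prod hf0 (c := f q) ?_
    rintro x (rfl | hx)
    · rfl
    · exact le_antisymm (hmax x (extremePoints_subset hx).1) ((extremePoints_subset hx).2 q hqC)
  have hFsub : F.Subsingleton := by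
    rw [← closure_convexHull_extremePoints
      (hFexp.isCompact (A.finite_toSet.isCompact_convexHull (𝕜 := ℝ)))
      (hFexp.convex (convex_convexHull ℝ _))]
    obtain h | ⟨e, h⟩ := hsub.eq_empty_or_singleton <;> simp [h]
  exact hqextF (by simp [hFsub.eq_singleton_of_mem hqF])

end GenPos

noncomputable def interiorPoints (S T : Finset (ℝ × ℝ)) : Finset (ℝ × ℝ) :=
  S.filter (fun p => p ∈ interior (convexHull ℝ (T : Set (ℝ × ℝ))))

theorem ConvexPos.disjoint_interiorPoints {S T : Finset (ℝ × ℝ)} (hT : ConvexPos T) :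
    Disjoint T (interiorPoints S T) :=
  disjoint_left.2 fun _ hpT hpI => hT.disjoint_interior.ne_of_mem hpT (mem_filter.1 hpI).2 rfl

theorem GenPos.filter_convexHullVertices_eq {S T : Finset (ℝ × ℝ)} (hS : GenPos S)
    (hTS : T ⊆ S) (hT : ConvexPos T) (hT3 : 3 ≤ #T) :
    {A ∈ S.powerset | 3 ≤ #A ∧ convexHullVertices A = T} =
      (interiorPoints S T).powerset.image (T ∪ ·) := by
  ext A
  simp only [mem_filter, mem_powerset, mem_image]
  constructor
  · rintro ⟨hAS, hA3, rfl⟩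
    refine ⟨A \ convexHullVertices A, fun q hq => ?_,
      union_sdiff_of_subset (convexHullVertices_subset A)⟩
    obtain ⟨hqA, hqV⟩ := mem_sdiff.1 hq
    rw [interiorPoints, mem_filter, convexHull_convexHullVertices]
    exact ⟨hAS hqA, hS.mem_interior_convexHull hAS hA3 hqA hqV⟩
  · rintro ⟨B, hB, rfl⟩
    exact ⟨union_subset hTS (hB.trans (filter_subset _ _)),
      hT3.trans (card_le_card subset_union_left),
      hT.convexHullVertices_union fun b hb => interior_subset (mem_filter.1 (hB hb)).2⟩

theorem GenPos.sum_pow_card_eq_sum_convexPos {S : Finset (ℝ × ℝ)} (hS : GenPos S) {R : Type*}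
    [CommSemiring R] (x : R) :
    ∑ A ∈ S.powerset with 3 ≤ #A, x ^ #A =
      ∑ T ∈ S.powerset with ConvexPos T ∧ 3 ≤ #T, x ^ #T * (1 + x) ^ #(interiorPoints S T) := by
  have hmaps : ∀ A ∈ S.powerset.filter (3 ≤ #·),
      convexHullVertices A ∈ S.powerset.filter (fun T => ConvexPos T ∧ 3 ≤ #T) := by
    intro A hA
    simp only [mem_filter, mem_powerset] at hA ⊢
    exact ⟨(convexHullVertices_subset A).trans hA.1, convexPos_convexHullVertices A,
      hS.three_le_card_convexHullVertices hA.1 hA.2⟩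
  rw [← sum_fiberwise_of_maps_to hmaps]
  refine sum_congr rfl fun T hT => ?_
  simp only [mem_filter, mem_powerset] at hT
  obtain ⟨hTS, hT, hT3⟩ := hT
  have hdisj {B} (hB : B ∈ (interiorPoints S T).powerset) : Disjoint T B :=
    hT.disjoint_interiorPoints.mono_right (mem_powerset.1 hB)
  rw [filter_filter, hS.filter_convexHullVertices_eq hTS hT hT3, sum_image, add_comm,
    ← sum_pow_mul_eq_add_pow, mul_sum]
  · refine sum_congr rfl fun B hB => ?_
    rw [card_union_of_disjoint (hdisj hB), pow_add, one_pow, mul_one]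
  · intro B hB B' hB' h
    simpa [union_sdiff_cancel_left (hdisj hB), union_sdiff_cancel_left (hdisj hB')] using
      congrArg (· \ T) h

theorem sum_convexPos_eq_sum_X_smul {M : Type*} [AddCommMonoid M] (S : Finset (ℝ × ℝ))
    (g : ℕ → ℕ → M) :
    ∑ T ∈ S.powerset with ConvexPos T ∧ 3 ≤ #T, g #T #(interiorPoints S T) =
      ∑ k ∈ Icc 3 #S, ∑ l ∈ range (#S - 2), X S k l • g k l := by
  have hmaps : ∀ T ∈ S.powerset.filter (fun T => ConvexPos T ∧ 3 ≤ #T),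
      (#T, #(interiorPoints S T)) ∈ Icc 3 #S ×ˢ range (#S - 2) := by
    intro T hT
    simp only [mem_filter, mem_powerset] at hT
    obtain ⟨hTS, hT, hT3⟩ := hT
    have hI : #(interiorPoints S T) ≤ #S - #T := by
      rw [← card_sdiff_of_subset hTS]
      exact card_le_card fun p hp => mem_sdiff.2 ⟨(mem_filter.1 hp).1,
        disjoint_right.1 hT.disjoint_interiorPoints hp⟩
    have := card_le_card hTS
    simp only [mem_product, mem_Icc, mem_range]
    omega
  rw [← sum_product', ← sum_fiberwise_of_maps_to hmaps]
  refine sum_congr rfl fun ⟨k, l⟩ hkl => ?_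
  rw [sum_congr rfl fun T hT => by obtain ⟨hk, hl⟩ := Prod.mk.inj (mem_filter.1 hT).2; rw [hk, hl],
    sum_const]
  congr 1
  simp only [mem_product, mem_Icc] at hkl
  unfold X interiorPoints
  congr 1
  ext T
  simp only [mem_filter, mem_powerset, mem_powersetCard, Prod.mk.injEq]
  constructor
  · rintro ⟨⟨hTS, hT, -⟩, rfl, hl⟩
    exact ⟨⟨hTS, rfl⟩, hT, hl⟩
  · rintro ⟨⟨hTS, rfl⟩, hT, hl⟩
    exact ⟨⟨hTS, hT, hkl.1.1⟩, rfl, hl⟩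

theorem sum_powerset_filter_three_le_pow_card {α R : Type*} [CommRing R] (s : Finset α) (x : R) :
    ∑ A ∈ s.powerset with 3 ≤ #A, x ^ #A =
      (1 + x) ^ #s - 1 - #s * x - (#s).choose 2 * x ^ 2 := by
  have hsmall : ∑ A ∈ s.powerset with ¬ 3 ≤ #A, x ^ #A =
      ∑ j ∈ range 3, ((#s).choose j : R) * x ^ j := by
    rw [← sum_fiberwise_of_maps_to (g := card) (t := range 3) (by simp)]
    refine sum_congr rfl fun j hj => ?_
    have : {A ∈ {A ∈ s.powerset | ¬ 3 ≤ #A} | #A = j} = powersetCard j s := by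
      ext A
      simp only [mem_filter, mem_powerset, mem_powersetCard, mem_range] at hj ⊢
      constructor
      · exact fun h => ⟨h.1.1, h.2⟩
      · rintro ⟨hA, rfl⟩
        exact ⟨⟨hA, by omega⟩, rfl⟩
    rw [this, sum_congr rfl fun A hA => by rw [(mem_powersetCard.1 hA).2], sum_const,
      card_powersetCard, nsmul_eq_mul]
  have htotal := sum_pow_mul_eq_add_pow x 1 s
  simp only [one_pow, mul_one] at htotal
  rw [← sum_filter_add_sum_filter_not _ (3 ≤ #·), hsmall, add_comm x] at htotal
  simp only [sum_range_succ, sum_range_zero, Nat.choose_zero_right, Nat.choose_one_right] at htotal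
  rw [← htotal]
  push_cast
  ring

theorem GenPos.sum_X_smul_pow_mul_pow {S : Finset (ℝ × ℝ)} (hS : GenPos S) {R : Type*}
    [CommRing R] (y : R) :
    ∑ k ∈ Icc 3 #S, ∑ l ∈ range (#S - 2), X S k l • (y ^ k * (1 + y) ^ l) =
      (1 + y) ^ #S - 1 - #S * y - (#S).choose 2 * y ^ 2 := by
  rw [← sum_convexPos_eq_sum_X_smul, ← hS.sum_pow_card_eq_sum_convexPos,
    sum_powerset_filter_three_le_pow_card]

open Complex in
theorem one_add_exp_pi_div_three_sq :
    1 + cexp (↑(Real.pi / 3) * I) ^ 2 = cexp (↑(Real.pi / 3) * I) := by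
  have h3 : (Real.sqrt 3 : ℂ) ^ 2 = 3 := by norm_cast; simp
  rw [exp_mul_I, ← ofReal_cos, ← ofReal_sin, Real.cos_pi_div_three, Real.sin_pi_div_three]
  push_cast
  linear_combination (I ^ 2 / 4) * h3 + (3 / 4) * I_sq

open Complex in
theorem re_exp_pi_div_three_pow (m : ℕ) :
    (cexp (↑(Real.pi / 3) * I) ^ m).re = Real.cos (m * Real.pi / 3) := by
  rw [← exp_nat_mul, ← mul_assoc, ← exp_ofReal_mul_I_re]
  push_cast
  ring_nf

open Real in
theorem stmt18_general (S : Finset (ℝ × ℝ)) (hgp : GenPos S) :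
    ∑ k ∈ Finset.Icc 3 S.card, ∑ l ∈ Finset.range (S.card - 2),
      2 * Real.cos ((2 * k + l) * π / 3) * X S k l =
    (S.card.choose 2 : ℝ) + S.card - 2 + 2 * Real.cos (S.card * π / 3) := by
  set ω := Complex.exp (↑(π / 3) * Complex.I)
  have hω : 1 + ω ^ 2 = ω := one_add_exp_pi_div_three_sq
  have hre (m : ℕ) : (ω ^ m).re = cos (m * π / 3) := re_exp_pi_div_three_pow m
  have key : ∑ k ∈ Icc 3 #S, ∑ l ∈ range (#S - 2), X S k l • ω ^ (2 * k + l) =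
      ω ^ #S - 1 - #S * (ω - 1) + (#S).choose 2 * ω := by
    have h := hgp.sum_X_smul_pow_mul_pow (ω ^ 2)
    simp only [hω, ← pow_mul, ← pow_add] at h
    linear_combination h - (#S + ((#S).choose 2 : ℂ) * ω * (ω + 1)) * hω
  have hterm (k l : ℕ) :
      2 * cos ((2 * k + l) * π / 3) * X S k l = 2 * (X S k l • ω ^ (2 * k + l)).re := by
    rw [Complex.smul_re, hre, nsmul_eq_mul]
    push_cast
    ring
  have hω1 : ω.re = 1 / 2 := by simpa using hre 1
  simp only [hterm, ← mul_sum, ← Complex.re_sum, key]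
  simp only [Complex.add_re, Complex.sub_re, Complex.mul_re, Complex.natCast_re,
    Complex.natCast_im, Complex.one_re, hre, hω1]
  ring

open Real in
theorem stmt18 (S : Finset (ℝ × ℝ)) (hgp : GenPos S) (hn : 3 ≤ S.card) :
    ∑ k ∈ Finset.Icc 3 S.card, ∑ l ∈ Finset.range (S.card - 2),
      2 * Real.cos ((2 * k + l) * π / 3) * X S k l =
    (S.card.choose 2 : ℝ) + S.card - 2 + 2 * Real.cos (S.card * π / 3) :=
  stmt18_general S hgp
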